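/- arXiv:1408.2317 — 3 statements merged into one kernel-verified Lean document; each statement's English description precedes it below -/
import Mathlib

section
/- The total chromatic number of the complete graph K_n equals n if n is odd and n+1 if n is even. -/
namespace ITC

variable {V : Type*}

/-- A total coloring: proper on vertices, edges, and incident vertex-edge pairs. -/
def IsTotalColoring (G : SimpleGraph V) (cv : V → ℕ) (ce : Sym2 V → ℕ) : Prop :=
  (∀ u v, G.Adj u v → cv u ≠ cv v) ∧
  (∀ e f, e ∈ G.edgeSet → f ∈ G.edgeSet → e ≠ f → (∃ w, w ∈ e ∧ w ∈ f) → ce e ≠ ce f) ∧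
  (∀ v e, e ∈ G.edgeSet → v ∈ e → cv v ≠ ce e)

/-- The set of colors on a vertex `v` together with its incident edges. -/
def palette (G : SimpleGraph V) (cv : V → ℕ) (ce : Sym2 V → ℕ) (v : V) : Set ℕ :=
  insert (cv v) {c | ∃ e ∈ G.edgeSet, v ∈ e ∧ ce e = c}

/-- Degree of a vertex. -/
noncomputable def deg (G : SimpleGraph V) (v : V) : ℕ := (G.neighborSet v).ncard

/-- An interval total `t`-coloring. -/
def IsIntervalTotalColoring (G : SimpleGraph V) (t : ℕ) (cv : V → ℕ)
    (ce : Sym2 V → ℕ) : Prop :=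
  IsTotalColoring G cv ce ∧
  (∀ v, cv v ∈ Set.Icc 1 t) ∧ (∀ e ∈ G.edgeSet, ce e ∈ Set.Icc 1 t) ∧
  (∀ c ∈ Set.Icc 1 t, (∃ v, cv v = c) ∨ (∃ e ∈ G.edgeSet, ce e = c)) ∧
  (∀ v, ∃ a, palette G cv ce v = Set.Icc a (a + deg G v))

def HasIntervalTotalColoring (G : SimpleGraph V) (t : ℕ) : Prop :=
  ∃ cv ce, IsIntervalTotalColoring G t cv ce

/-- Minimum span of interval total colorings. -/
noncomputable def wtau (G : SimpleGraph V) : ℕ := sInf {t | HasIntervalTotalColoring G t}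

/-- Maximum span of interval total colorings. -/
noncomputable def Wtau (G : SimpleGraph V) : ℕ := sSup {t | HasIntervalTotalColoring G t}

/-- Total chromatic number: least `k` such that there is a total coloring
with colors in `{1, …, k}`. -/
noncomputable def totalChromaticNumber (G : SimpleGraph V) : ℕ :=
  sInf {k | ∃ cv ce, IsTotalColoring G cv ce ∧ (∀ v, cv v ∈ Set.Icc 1 k) ∧
    ∀ e ∈ G.edgeSet, ce e ∈ Set.Icc 1 k}

/-- A proper edge coloring. -/
def IsProperEdgeColoring (G : SimpleGraph V) (ce : Sym2 V → ℕ) : Prop :=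
  ∀ e f, e ∈ G.edgeSet → f ∈ G.edgeSet → e ≠ f → (∃ w, w ∈ e ∧ w ∈ f) → ce e ≠ ce f

/-- Colors appearing on the edges incident to `v`. -/
def edgePalette (G : SimpleGraph V) (ce : Sym2 V → ℕ) (v : V) : Set ℕ :=
  {c | ∃ e ∈ G.edgeSet, v ∈ e ∧ ce e = c}

/-- An interval (edge) `t`-coloring. -/
def IsIntervalEdgeColoring (G : SimpleGraph V) (t : ℕ) (ce : Sym2 V → ℕ) : Prop :=
  IsProperEdgeColoring G ce ∧
  (∀ e ∈ G.edgeSet, ce e ∈ Set.Icc 1 t) ∧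
  (∀ c ∈ Set.Icc 1 t, ∃ e ∈ G.edgeSet, ce e = c) ∧
  (∀ v, ∃ a, edgePalette G ce v = Set.Icc (a + 1) (a + deg G v))

/-- The hypercube `Q_n`. -/
def hypercube (n : ℕ) : SimpleGraph (Fin n → Bool) where
  Adj u v := ∃! i, u i ≠ v i
  symm := by
    constructor
    rintro u v ⟨i, hi, hu⟩
    exact ⟨i, Ne.symm hi, fun j hj => hu j (Ne.symm hj)⟩
  loopless := by
    constructor
    rintro u ⟨i, hi, -⟩
    exact hi rfl

/-- The complete graph on `Fin (2*r)` minus the perfect matching joining `i` and `i+r`. -/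
def Kminus (r : ℕ) : SimpleGraph (Fin (2 * r)) where
  Adj i j := i ≠ j ∧ ¬((i : ℕ) + r = (j : ℕ) ∨ (j : ℕ) + r = (i : ℕ))
  symm := by
    constructor
    rintro i j ⟨h1, h2⟩
    exact ⟨h1.symm, fun h => h2 h.symm⟩
  loopless := by
    constructor
    rintro i ⟨h1, -⟩
    exact h1 rfl

/-- Blow up each vertex of `H` into a copy of `β` (no edges inside copies). -/
def blowup {α : Type*} (H : SimpleGraph α) (β : Type*) : SimpleGraph (α × β) where
  Adj u v := H.Adj u.1 v.1
  symm := ⟨fun _ _ h => H.adj_symm h⟩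
  loopless := ⟨fun u h => H.irrefl h⟩

lemma _root_.Finset.even_card_of_existsUnique_partner {α : Type*} {s : Finset α}
    {r : α → α → Prop} (hirr : ∀ a, ¬ r a a) (hsymm : ∀ a b, r a b → r b a)
    (hpartner : ∀ a ∈ s, ∃! b, b ∈ s ∧ r a b) : Even s.card := by
  choose! f hf hf_unique using hpartner
  have hinv : ∀ a ∈ s, f (f a) = a := fun a ha =>
    (hf_unique (f a) (hf a ha).1 a ⟨ha, hsymm _ _ (hf a ha).2⟩).symm
  have hsum : ∑ _a ∈ s, (1 : ZMod 2) = 0 :=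
    Finset.sum_involution (fun a _ => f a) (fun _ _ => by decide)
      (fun a ha _ h => hirr a (by simpa only [h] using (hf a ha).2)) (fun a ha => (hf a ha).1) hinv
  rwa [Finset.sum_const, nsmul_one, ZMod.natCast_eq_zero_iff_even] at hsum

section TotalColoring

variable {G : SimpleGraph V} {cv : V → ℕ} {ce : Sym2 V → ℕ} {k : ℕ}

def IsTotalColorable (G : SimpleGraph V) (k : ℕ) : Prop :=
  ∃ cv ce, IsTotalColoring G cv ce ∧ (∀ v, cv v ∈ Set.Icc 1 k) ∧
    ∀ e ∈ G.edgeSet, ce e ∈ Set.Icc 1 k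

lemma totalChromaticNumber_eq_sInf (G : SimpleGraph V) :
    totalChromaticNumber G = sInf {k | IsTotalColorable G k} := rfl

lemma palette_eq_insert_image (G : SimpleGraph V) (cv : V → ℕ) (ce : Sym2 V → ℕ) (v : V) :
    palette G cv ce v = insert (cv v) ((fun u => ce s(v, u)) '' G.neighborSet v) := by
  rw [palette]
  congr 1
  ext c
  constructor
  · rintro ⟨e, he, hve, rfl⟩
    obtain ⟨u, rfl⟩ := Sym2.mem_iff_exists.mp hve
    exact ⟨u, he, rfl⟩
  · rintro ⟨u, hu, rfl⟩
    exact ⟨s(v, u), hu, Sym2.mem_mk_left v u, rfl⟩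

lemma palette_subset_Icc (hcv : ∀ v, cv v ∈ Set.Icc 1 k)
    (hce : ∀ e ∈ G.edgeSet, ce e ∈ Set.Icc 1 k) (v : V) :
    palette G cv ce v ⊆ Set.Icc 1 k := by
  rintro c (rfl | ⟨e, he, -, rfl⟩)
  exacts [hcv v, hce e he]

namespace IsTotalColoring

variable {u u' v : V}

lemma edge_ne_edge (h : IsTotalColoring G cv ce) (hu : G.Adj v u) (hu' : G.Adj v u')
    (hne : u ≠ u') : ce s(v, u) ≠ ce s(v, u') :=
  h.2.1 _ _ hu hu' (fun hs => hne (Sym2.congr_right.mp hs))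
    ⟨v, Sym2.mem_mk_left v u, Sym2.mem_mk_left v u'⟩

lemma vertex_ne_edge (h : IsTotalColoring G cv ce) (hu : G.Adj v u) : cv v ≠ ce s(v, u) :=
  h.2.2 v _ hu (Sym2.mem_mk_left v u)

lemma vertex_ne_edge' (h : IsTotalColoring G cv ce) (hu : G.Adj v u) : cv u ≠ ce s(v, u) :=
  h.2.2 u _ hu (Sym2.mem_mk_right v u)

lemma ncard_palette (h : IsTotalColoring G cv ce) (hfin : (G.neighborSet v).Finite) :
    (palette G cv ce v).ncard = deg G v + 1 := by
  have hinj : Set.InjOn (fun u => ce s(v, u)) (G.neighborSet v) := fun u hu u' hu' heq =>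
    by_contra fun hne => h.edge_ne_edge hu hu' hne heq
  have hnotMem : cv v ∉ (fun u => ce s(v, u)) '' G.neighborSet v := by
    rintro ⟨u, hu, heq⟩
    exact h.vertex_ne_edge hu heq.symm
  rw [palette_eq_insert_image, Set.ncard_insert_of_notMem hnotMem (hfin.image _),
    hinj.ncard_image, deg]

lemma deg_add_one_le (h : IsTotalColoring G cv ce) (hcv : ∀ v, cv v ∈ Set.Icc 1 k)
    (hce : ∀ e ∈ G.edgeSet, ce e ∈ Set.Icc 1 k) (hfin : (G.neighborSet v).Finite) :
    deg G v + 1 ≤ k := by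
  calc deg G v + 1 = (palette G cv ce v).ncard := (h.ncard_palette hfin).symm
    _ ≤ (Set.Icc 1 k).ncard := Set.ncard_le_ncard (palette_subset_Icc hcv hce v)
    _ = k := by simp

lemma palette_eq_Icc (h : IsTotalColoring G cv ce) (hcv : ∀ v, cv v ∈ Set.Icc 1 k)
    (hce : ∀ e ∈ G.edgeSet, ce e ∈ Set.Icc 1 k) (hfin : (G.neighborSet v).Finite)
    (hdeg : deg G v + 1 = k) : palette G cv ce v = Set.Icc 1 k :=
  Set.eq_of_subset_of_ncard_le (palette_subset_Icc hcv hce v)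
    (by simp [h.ncard_palette hfin, hdeg])

end IsTotalColoring

end TotalColoring

section CompleteGraph

variable [Fintype V] {k : ℕ}

lemma deg_top (v : V) : deg (⊤ : SimpleGraph V) v = Fintype.card V - 1 := by
  rw [deg, SimpleGraph.neighborSet_top, Set.ncard_compl, Set.ncard_singleton,
    Nat.card_eq_fintype_card]

lemma IsTotalColorable.card_le_of_top [Nonempty V] (h : IsTotalColorable (⊤ : SimpleGraph V) k) :
    Fintype.card V ≤ k := by
  obtain ⟨cv, ce, hc, hcv, hce⟩ := h
  obtain ⟨v⟩ := ‹Nonempty V›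
  have := hc.deg_add_one_le hcv hce (Set.toFinite _) (v := v)
  rw [deg_top] at this
  have := Fintype.card_pos (α := V)
  omega

/-- In a total coloring of `K_n` with `n` colors, `n` even, the edges of the color of a vertex
`w` would form a perfect matching of the `n - 1` other vertices. -/
lemma not_isTotalColorable_top_of_even (hV : Even (Fintype.card V)) [Nonempty V] :
    ¬ IsTotalColorable (⊤ : SimpleGraph V) (Fintype.card V) := by
  classical
  rintro ⟨cv, ce, hc, hcv, hce⟩
  obtain ⟨w⟩ := ‹Nonempty V›
  have hcard : 0 < Fintype.card V := Fintype.card_pos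
  have hpartner :
      ∀ v ≠ w, ∃ u, u ≠ w ∧ (⊤ : SimpleGraph V).Adj v u ∧ ce s(v, u) = cv w := by
    intro v hvw
    have hpal := hc.palette_eq_Icc hcv hce (Set.toFinite _) (v := v) (by rw [deg_top]; omega)
    have hmem : cv w ∈ palette ⊤ cv ce v := hpal ▸ hcv w
    rw [palette_eq_insert_image] at hmem
    obtain hvw' | ⟨u, hu, hcu⟩ := hmem
    · exact absurd hvw' (hc.1 w v (Ne.symm hvw))
    refine ⟨u, ?_, hu, hcu⟩
    rintro rfl
    exact hc.vertex_ne_edge' hu hcu.symm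
  have heven := Finset.even_card_of_existsUnique_partner (s := Finset.univ.erase w)
    (r := fun a b => (⊤ : SimpleGraph V).Adj a b ∧ ce s(a, b) = cv w)
    (fun a h => h.1.ne rfl)
    (fun a b ⟨hab, hc⟩ => ⟨hab.symm, Sym2.eq_swap ▸ hc⟩) ?_
  · rw [Finset.card_erase_of_mem (Finset.mem_univ w), Finset.card_univ] at heven
    exact Nat.not_even_iff_odd.mpr (Nat.Even.sub_odd hcard hV odd_one) heven
  intro v hv
  obtain ⟨u, huw, hvu, hcu⟩ := hpartner v (Finset.ne_of_mem_erase hv)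
  refine ⟨u, ⟨Finset.mem_erase.mpr ⟨huw, Finset.mem_univ u⟩, hvu, hcu⟩, ?_⟩
  rintro u' ⟨-, hvu', hcu'⟩
  by_contra hne
  exact hc.edge_ne_edge hvu' hvu hne (hcu'.trans hcu.symm)

end CompleteGraph

lemma _root_.Fin.eq_of_modEq {n m : ℕ} (hnm : n ≤ m) {a b : Fin n}
    (h : (a : ℕ) ≡ b [MOD m]) : a = b :=
  Fin.ext (h.eq_of_lt_of_lt (a.2.trans_le hnm) (b.2.trans_le hnm))

/-- For odd `m ≥ n`, color vertex `a` by `2a mod m` and edge `ab` by `a + b mod m`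
(shifted into `{1, …, m}`); oddness of `m` makes doubling injective mod `m`. -/
lemma isTotalColorable_top_fin {n m : ℕ} (hnm : n ≤ m) (hm : Odd m) :
    IsTotalColorable (⊤ : SimpleGraph (Fin n)) m := by
  have hmod : ∀ x, x % m + 1 ∈ Set.Icc 1 m := fun x =>
    ⟨Nat.le_add_left 1 _, Nat.mod_lt x hm.pos⟩
  refine ⟨fun a => 2 * (a : ℕ) % m + 1,
    Sym2.lift ⟨fun a b => ((a : ℕ) + b) % m + 1,
      fun a b => by dsimp only; rw [Nat.add_comm (a : ℕ)]⟩,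
    ⟨?vertex, ?edge, ?incidence⟩, fun a => hmod _, fun e _ => ?range⟩
  case vertex =>
    intro u v huv hcol
    have h2 : 2 * (u : ℕ) ≡ 2 * v [MOD m] := Nat.add_right_cancel hcol
    exact huv (Fin.eq_of_modEq hnm (h2.cancel_left_of_coprime (Nat.coprime_comm.mp
      hm.coprime_two_left)))
  case edge =>
    rintro e f he hf hef ⟨w, hwe, hwf⟩ hcol
    obtain ⟨u, rfl⟩ := Sym2.mem_iff_exists.mp hwe
    obtain ⟨u', rfl⟩ := Sym2.mem_iff_exists.mp hwf
    have h2 : (w : ℕ) + u ≡ w + u' [MOD m] := Nat.add_right_cancel hcol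
    exact hef (by rw [Fin.eq_of_modEq hnm (h2.add_left_cancel' _)])
  case incidence =>
    intro v e he hve hcol
    obtain ⟨u, rfl⟩ := Sym2.mem_iff_exists.mp hve
    have h2 : (v : ℕ) + v ≡ v + u [MOD m] := by
      rw [← two_mul]; exact Nat.add_right_cancel hcol
    exact he (by rw [Fin.eq_of_modEq hnm (h2.add_left_cancel' _)])
  case range =>
    induction e using Sym2.ind
    exact hmod _

theorem stmt0 (n : ℕ) (hn : 0 < n) :
    totalChromaticNumber (⊤ : SimpleGraph (Fin n)) = if Odd n then n else n + 1 := by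
  have : Nonempty (Fin n) := ⟨⟨0, hn⟩⟩
  have hlower : ∀ k ∈ {k | IsTotalColorable (⊤ : SimpleGraph (Fin n)) k}, n ≤ k :=
    fun k hk => Fintype.card_fin n ▸ hk.card_le_of_top
  rw [totalChromaticNumber_eq_sInf]
  split_ifs with hodd
  · exact IsLeast.csInf_eq ⟨isTotalColorable_top_fin le_rfl hodd, hlower⟩
  · have hne : ¬ IsTotalColorable (⊤ : SimpleGraph (Fin n)) n := by
      simpa using not_isTotalColorable_top_of_even (V := Fin n)
        (by simpa using Nat.not_odd_iff_even.mp hodd)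
    refine IsLeast.csInf_eq ⟨isTotalColorable_top_fin n.le_succ ?_, fun k hk => ?_⟩
    · exact (Nat.not_odd_iff_even.mp hodd).add_one
    · exact (hlower k hk).lt_of_ne (fun h => hne (h ▸ hk))

end ITC
end

section
/- For every positive integer l, there exists a graph G admitting an interval total coloring such that w_τ(G) − χ''(G) ≥ l. Specifically, with n = l+3, the complete bipartite graph K_{n+l, 2n} satisfies w_τ(K_{n+l,2n}) ≥ 2n+1+l while χ''(K_{n+l,2n}) = 2n+1. -/
/-!
Write `u_i` (`i < m`) and `v_j` (`j < N`) for the two sides of `K_{m,N}`.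

Colouring `u_i` by `i + 1`, `v_j` by `m + j + 2` and `u_i v_j` by `i + j + 2` is an interval total
`(m + N + 1)`-colouring. For `m < N`, colouring every `u_i` by `N + 1`, `u_i v_j` by
`(i + j) mod N + 1` and `v_j` by `(j + m) mod N + 1` is a total `(N + 1)`-colouring, and `N + 1`
colours are needed at a vertex of degree `N`.

In an interval total `t`-colouring the palette of each `v_j` is an interval of `m + 1` colours
inside `[1, t]`, so it contains every colour `c ∈ [t - m, m + 1]`. The edges coloured `c` form a
matching with at most `m` edges, so at least `N - m` of the vertices `v_j` are themselves coloured
`c`. Summing over these `2m + 2 - t` colours gives `(2m + 2 - t)(N - m) ≤ N`, which for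
`m = n + l`, `N = 2n` and `n = l + 3` reads `3(2n + 2l + 2 - t) ≤ 2n`,
i.e. `t ≥ 2n + l + 1` as `l > 0`.
-/

namespace ITC

variable {V : Type*}

lemma IsTotalColoring.deg_add_one_le_s3 [Finite V] {G : SimpleGraph V} {cv : V → ℕ}
    {ce : Sym2 V → ℕ} {k : ℕ} (h : IsTotalColoring G cv ce) {v : V} (hv : cv v ∈ Set.Icc 1 k)
    (hce : ∀ e ∈ G.edgeSet, ce e ∈ Set.Icc 1 k) : deg G v + 1 ≤ k := by
  set S := (fun w => ce s(v, w)) '' G.neighborSet v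
  have hinj : (G.neighborSet v).InjOn fun w => ce s(v, w) := by
    intro w hw w' hw' hcol
    by_contra hne
    exact h.2.1 _ _ hw hw' (by simp [hne, G.ne_of_adj hw']) ⟨v, by simp, by simp⟩ hcol
  have hnot : cv v ∉ S := by
    rintro ⟨w, hw, hcol⟩
    exact h.2.2 v _ hw (by simp) hcol.symm
  calc deg G v + 1 = (insert (cv v) S).ncard := by
        rw [Set.ncard_insert_of_notMem hnot, hinj.ncard_image, deg]
    _ ≤ (Set.Icc 1 k).ncard :=
        Set.ncard_le_ncard (Set.insert_subset hv (Set.image_subset_iff.2 fun w hw => hce _ hw))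
    _ = k := by simp

lemma IsIntervalTotalColoring.palette_subset_Icc {G : SimpleGraph V} {t : ℕ} {cv : V → ℕ}
    {ce : Sym2 V → ℕ} (h : IsIntervalTotalColoring G t cv ce) (v : V) :
    palette G cv ce v ⊆ Set.Icc 1 t := by
  rintro c (rfl | ⟨e, he, -, rfl⟩)
  exacts [h.2.1 v, h.2.2.1 e he]

section CompleteBipartite

open Finset

variable {m N : ℕ}

local notation "K[" m ", " N "]" => completeBipartiteGraph (Fin m) (Fin N)

lemma mem_edgeSet_completeBipartiteGraph {e : Sym2 (Fin m ⊕ Fin N)} :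
    e ∈ K[m, N].edgeSet ↔ ∃ i j, e = s(Sum.inl i, Sum.inr j) := by
  refine ⟨fun he => ?_, by rintro ⟨i, j, rfl⟩; simp⟩
  induction e with
  | _ x y => rcases x with i | i <;> rcases y with j | j <;> simp_all [Sym2.eq_swap]

lemma mk_mem_edgeSet_completeBipartiteGraph (i : Fin m) (j : Fin N) :
    s(Sum.inl i, Sum.inr j) ∈ K[m, N].edgeSet :=
  mem_edgeSet_completeBipartiteGraph.2 ⟨i, j, rfl⟩

lemma palette_inl (cv : Fin m ⊕ Fin N → ℕ) (ce : Sym2 (Fin m ⊕ Fin N) → ℕ) (i : Fin m) :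
    palette K[m, N] cv ce (Sum.inl i) =
      insert (cv (Sum.inl i)) (Set.range fun j => ce s(Sum.inl i, Sum.inr j)) := by
  refine congrArg _ (Set.ext fun c => ⟨?_, ?_⟩)
  · rintro ⟨e, he, hi, rfl⟩
    obtain ⟨i', j, rfl⟩ := mem_edgeSet_completeBipartiteGraph.1 he
    obtain rfl : i' = i := by simpa [eq_comm] using hi
    exact ⟨j, rfl⟩
  · rintro ⟨j, rfl⟩
    exact ⟨_, mk_mem_edgeSet_completeBipartiteGraph i j, by simp, rfl⟩

lemma palette_inr (cv : Fin m ⊕ Fin N → ℕ) (ce : Sym2 (Fin m ⊕ Fin N) → ℕ) (j : Fin N) :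
    palette K[m, N] cv ce (Sum.inr j) =
      insert (cv (Sum.inr j)) (Set.range fun i => ce s(Sum.inl i, Sum.inr j)) := by
  refine congrArg _ (Set.ext fun c => ⟨?_, ?_⟩)
  · rintro ⟨e, he, hj, rfl⟩
    obtain ⟨i, j', rfl⟩ := mem_edgeSet_completeBipartiteGraph.1 he
    obtain rfl : j' = j := by simpa [eq_comm] using hj
    exact ⟨i, rfl⟩
  · rintro ⟨i, rfl⟩
    exact ⟨_, mk_mem_edgeSet_completeBipartiteGraph i j, by simp, rfl⟩

lemma deg_inl (i : Fin m) : deg K[m, N] (Sum.inl i) = N := by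
  have : K[m, N].neighborSet (Sum.inl i) = Set.range Sum.inr := by
    ext (v | v) <;> simp
  rw [deg, this, Set.ncard_range_of_injective Sum.inr_injective, Nat.card_fin]

lemma deg_inr (j : Fin N) : deg K[m, N] (Sum.inr j) = m := by
  have : K[m, N].neighborSet (Sum.inr j) = Set.range Sum.inl := by
    ext (v | v) <;> simp
  rw [deg, this, Set.ncard_range_of_injective Sum.inl_injective, Nat.card_fin]

lemma isTotalColoring_completeBipartiteGraph_iff {cv : Fin m ⊕ Fin N → ℕ}
    {ce : Sym2 (Fin m ⊕ Fin N) → ℕ} :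
    IsTotalColoring K[m, N] cv ce ↔
      (∀ i j, cv (Sum.inl i) ≠ cv (Sum.inr j)) ∧
      (∀ i j j', j ≠ j' → ce s(Sum.inl i, Sum.inr j) ≠ ce s(Sum.inl i, Sum.inr j')) ∧
      (∀ i i' j, i ≠ i' → ce s(Sum.inl i, Sum.inr j) ≠ ce s(Sum.inl i', Sum.inr j)) ∧
      (∀ i j, cv (Sum.inl i) ≠ ce s(Sum.inl i, Sum.inr j)) ∧
      (∀ i j, cv (Sum.inr j) ≠ ce s(Sum.inl i, Sum.inr j)) := by
  have hmem := mk_mem_edgeSet_completeBipartiteGraph (m := m) (N := N)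
  constructor
  · rintro ⟨hv, he, hve⟩
    refine ⟨fun i j => hv _ _ (by simp), fun i j j' hj => he _ _ (hmem i j) (hmem i j') ?_
      ⟨Sum.inl i, by simp, by simp⟩, fun i i' j hi => he _ _ (hmem i j) (hmem i' j) ?_
      ⟨Sum.inr j, by simp, by simp⟩, fun i j => hve _ _ (hmem i j) (by simp),
      fun i j => hve _ _ (hmem i j) (by simp)⟩ <;> simpa
  · rintro ⟨hv, hrow, hcol, hl, hr⟩
    refine ⟨?_, ?_, ?_⟩
    · rintro (i | i) (j | j) hadj <;> simp at hadj
      exacts [hv i j, (hv j i).symm]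
    · intro e f he hf hne ⟨w, hwe, hwf⟩
      obtain ⟨i, j, rfl⟩ := mem_edgeSet_completeBipartiteGraph.1 he
      obtain ⟨i', j', rfl⟩ := mem_edgeSet_completeBipartiteGraph.1 hf
      simp only [Sym2.mem_iff] at hwe hwf
      rcases hwe with rfl | rfl <;> simp only [reduceCtorEq, Sum.inl.injEq, Sum.inr.injEq,
        or_false, false_or] at hwf <;> subst hwf
      exacts [hrow _ _ _ fun h => hne (h ▸ rfl), hcol _ _ _ fun h => hne (h ▸ rfl)]
    · intro v e he hv
      obtain ⟨i, j, rfl⟩ := mem_edgeSet_completeBipartiteGraph.1 he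
      rcases Sym2.mem_iff.1 hv with rfl | rfl
      exacts [hl i j, hr i j]

variable (m N) in
def intervalVertexColoring : Fin m ⊕ Fin N → ℕ :=
  Sum.elim (fun i => i + 1) (fun j => m + j + 2)

variable (m N) in
def intervalEdgeColoring : Sym2 (Fin m ⊕ Fin N) → ℕ :=
  let h : Fin m ⊕ Fin N → ℕ := Sum.elim (fun i => i + 1) (fun j => j + 1)
  Sym2.lift ⟨fun u v => h u + h v, fun _ _ => add_comm _ _⟩

@[simp]
lemma intervalEdgeColoring_mk (i : Fin m) (j : Fin N) :
    intervalEdgeColoring m N s(Sum.inl i, Sum.inr j) = i + j + 2 := by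
  simp only [intervalEdgeColoring, Sym2.lift_mk, Sum.elim_inl, Sum.elim_inr]
  ring

lemma isIntervalTotalColoring_completeBipartiteGraph (hm : 0 < m) (hN : 0 < N) :
    IsIntervalTotalColoring K[m, N] (m + N + 1)
      (intervalVertexColoring m N) (intervalEdgeColoring m N) := by
  refine ⟨isTotalColoring_completeBipartiteGraph_iff.2 ?_, ?_, ?_, ?_, ?_⟩
  · simp only [intervalVertexColoring, Sum.elim_inl, Sum.elim_inr, intervalEdgeColoring_mk,
      ne_eq, Fin.ext_iff]
    refine ⟨?_, ?_, ?_, ?_, ?_⟩ <;> intros <;> omega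
  · rintro (i | j) <;> simp only [intervalVertexColoring, Sum.elim_inl, Sum.elim_inr,
      Set.mem_Icc] <;> omega
  · intro e he
    obtain ⟨i, j, rfl⟩ := mem_edgeSet_completeBipartiteGraph.1 he
    simp only [intervalEdgeColoring_mk, Set.mem_Icc]
    omega
  · rintro c ⟨hc1, hc2⟩
    by_cases hcm : c ≤ m
    · exact Or.inl ⟨Sum.inl ⟨c - 1, by omega⟩, by simp [intervalVertexColoring]; omega⟩
    by_cases hcmN : c ≤ m + N
    · refine Or.inr ⟨_, mk_mem_edgeSet_completeBipartiteGraph ⟨m - 1, by omega⟩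
        ⟨c - m - 1, by omega⟩, ?_⟩
      simp only [intervalEdgeColoring_mk]
      omega
    · exact Or.inl ⟨Sum.inr ⟨N - 1, by omega⟩, by simp [intervalVertexColoring]; omega⟩
  · rintro (i | j)
    · refine ⟨i + 1, Set.ext fun c => ?_⟩
      simp only [palette_inl, deg_inl, intervalVertexColoring, Sum.elim_inl,
        intervalEdgeColoring_mk, Set.mem_insert_iff, Set.mem_range, Set.mem_Icc]
      refine ⟨by rintro (rfl | ⟨j, rfl⟩) <;> omega, fun hc => ?_⟩
      by_cases hci : c = i + 1
      · exact Or.inl hci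
      · exact Or.inr ⟨⟨c - i - 2, by omega⟩, by simp only; omega⟩
    · refine ⟨j + 2, Set.ext fun c => ?_⟩
      simp only [palette_inr, deg_inr, intervalVertexColoring, Sum.elim_inr,
        intervalEdgeColoring_mk, Set.mem_insert_iff, Set.mem_range, Set.mem_Icc]
      refine ⟨by rintro (rfl | ⟨i, rfl⟩) <;> omega, fun hc => ?_⟩
      by_cases hcj : c = m + j + 2
      · exact Or.inl hcj
      · exact Or.inr ⟨⟨c - j - 2, by omega⟩, by simp only; omega⟩

variable (m N) in
def cyclicVertexColoring : Fin m ⊕ Fin N → ℕ :=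
  Sum.elim (fun _ => N + 1) (fun j => (j + m) % N + 1)

variable (m N) in
def cyclicEdgeColoring : Sym2 (Fin m ⊕ Fin N) → ℕ :=
  let h : Fin m ⊕ Fin N → ℕ := Sum.elim (fun i => i) (fun j => j)
  Sym2.lift ⟨fun u v => (h u + h v) % N + 1, fun u v => by simp only [add_comm (h u)]⟩

@[simp]
lemma cyclicEdgeColoring_mk (i : Fin m) (j : Fin N) :
    cyclicEdgeColoring m N s(Sum.inl i, Sum.inr j) = (i + j) % N + 1 := by
  simp [cyclicEdgeColoring]

lemma isTotalColoring_cyclicColoring (hmN : m < N) :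
    IsTotalColoring K[m, N] (cyclicVertexColoring m N) (cyclicEdgeColoring m N) := by
  have hN : 0 < N := by omega
  have cancel {a b c : ℕ} (h : (a + b) % N = (a + c) % N) (hb : b < N) (hc : c < N) : b = c :=
    (Nat.ModEq.add_left_cancel' a h).eq_of_lt_of_lt hb hc
  refine isTotalColoring_completeBipartiteGraph_iff.2 ⟨?_, ?_, ?_, ?_, ?_⟩ <;>
    simp only [cyclicVertexColoring, Sum.elim_inl, Sum.elim_inr, cyclicEdgeColoring_mk, ne_eq,
      Nat.add_right_cancel_iff]
  · intro i j
    have := Nat.mod_lt (j + m) hN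
    omega
  · intro i j j' hj h
    exact hj (Fin.ext (cancel h j.isLt j'.isLt))
  · intro i i' j hi h
    rw [add_comm (i : ℕ), add_comm (i' : ℕ)] at h
    exact hi (Fin.ext (cancel h (i.isLt.trans hmN) (i'.isLt.trans hmN)))
  · intro i j
    have := Nat.mod_lt (i + j) hN
    omega
  · intro i j h
    rw [add_comm (i : ℕ)] at h
    have := cancel h hmN (i.isLt.trans hmN)
    omega

lemma cyclicColoring_mem_Icc (hmN : m < N) :
    (∀ v, cyclicVertexColoring m N v ∈ Set.Icc 1 (N + 1)) ∧
      ∀ e ∈ K[m, N].edgeSet, cyclicEdgeColoring m N e ∈ Set.Icc 1 (N + 1) := by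
  have hN : 0 < N := by omega
  refine ⟨?_, fun e he => ?_⟩
  · rintro (i | j) <;> simp only [cyclicVertexColoring, Sum.elim_inl, Sum.elim_inr, Set.mem_Icc]
    · omega
    · have := Nat.mod_lt (j + m) hN
      omega
  · obtain ⟨i, j, rfl⟩ := mem_edgeSet_completeBipartiteGraph.1 he
    have := Nat.mod_lt (i + j) hN
    simp only [cyclicEdgeColoring_mk, Set.mem_Icc]
    omega

lemma totalChromaticNumber_completeBipartiteGraph (hm : 0 < m) (hmN : m < N) :
    totalChromaticNumber K[m, N] = N + 1 := by
  have hmem : N + 1 ∈ {k | ∃ cv ce, IsTotalColoring K[m, N] cv ce ∧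
      (∀ v, cv v ∈ Set.Icc 1 k) ∧ ∀ e ∈ K[m, N].edgeSet, ce e ∈ Set.Icc 1 k} :=
    ⟨_, _, isTotalColoring_cyclicColoring hmN, cyclicColoring_mem_Icc hmN⟩
  refine le_antisymm (Nat.sInf_le hmem) (le_csInf ⟨_, hmem⟩ ?_)
  rintro k ⟨cv, ce, h, hcv, hce⟩
  simpa [deg_inl] using h.deg_add_one_le_s3 (hcv (Sum.inl ⟨0, hm⟩)) hce

lemma IsTotalColoring.sub_le_card_inr_color_eq {cv : Fin m ⊕ Fin N → ℕ}
    {ce : Sym2 (Fin m ⊕ Fin N) → ℕ} (h : IsTotalColoring K[m, N] cv ce) {c : ℕ}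
    (hc : ∀ j, c ∈ palette K[m, N] cv ce (Sum.inr j)) :
    N - m ≤ #{j | cv (Sum.inr j) = c} := by
  have hrow := (isTotalColoring_completeBipartiteGraph_iff.1 h).2.1
  let E : Finset (Fin m × Fin N) := {p | ce s(Sum.inl p.1, Sum.inr p.2) = c}
  have hE : #E ≤ m := by
    have hinj : (E : Set (Fin m × Fin N)).InjOn Prod.fst := by
      rintro ⟨i, j⟩ hp ⟨i', j'⟩ hq (rfl : i = i')
      simp only [E, mem_coe, mem_filter, mem_univ, true_and] at hp hq
      by_contra hne
      exact hrow i j j' (fun hj => hne (hj ▸ rfl)) (hp.trans hq.symm)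
    simpa using card_le_card_of_injOn Prod.fst (fun _ _ => mem_univ _) hinj
  have hsurj : Set.SurjOn Prod.snd (E : Set (Fin m × Fin N))
      ({j | ¬cv (Sum.inr j) = c} : Finset (Fin N)) := by
    intro j hj
    simp only [mem_coe, mem_filter, mem_univ, true_and] at hj
    obtain hcv | ⟨i, hi⟩ := palette_inr cv ce j ▸ hc j
    · exact absurd hcv.symm hj
    · exact ⟨(i, j), by simpa [E] using hi, rfl⟩
  have hT := card_le_card_of_surjOn _ hsurj
  have hsplit := card_filter_add_card_filter_not (s := univ) (fun j => cv (Sum.inr j) = c)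
  rw [card_univ, Fintype.card_fin] at hsplit
  omega

lemma IsIntervalTotalColoring.mem_palette_inr {t : ℕ} {cv : Fin m ⊕ Fin N → ℕ}
    {ce : Sym2 (Fin m ⊕ Fin N) → ℕ} (h : IsIntervalTotalColoring K[m, N] t cv ce) (j : Fin N)
    {c : ℕ} (hc₁ : t - m ≤ c) (hc₂ : c ≤ m + 1) :
    c ∈ palette K[m, N] cv ce (Sum.inr j) := by
  obtain ⟨a, ha⟩ := h.2.2.2.2 (Sum.inr j)
  have hsub := h.palette_subset_Icc (Sum.inr j)
  rw [ha, deg_inr] at hsub ⊢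
  obtain ⟨ha, -⟩ := hsub ⟨le_rfl, by omega⟩
  obtain ⟨-, hat⟩ := hsub ⟨by omega, le_rfl⟩
  exact ⟨by omega, by omega⟩

lemma HasIntervalTotalColoring.mul_sub_le {t : ℕ} (h : HasIntervalTotalColoring K[m, N] t) :
    (2 * m + 2 - t) * (N - m) ≤ N := by
  obtain ⟨cv, ce, h⟩ := h
  obtain rfl | hN := N.eq_zero_or_pos
  · simp
  have hmt := h.1.deg_add_one_le_s3 (h.2.1 (Sum.inr ⟨0, hN⟩)) h.2.2.1
  rw [deg_inr] at hmt
  let C := Icc (t - m) (m + 1)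
  calc (2 * m + 2 - t) * (N - m)
      ≤ #C * (N - m) := Nat.mul_le_mul_right _ (by simp only [C, Nat.card_Icc]; omega)
    _ = ∑ _c ∈ C, (N - m) := by rw [sum_const, smul_eq_mul]
    _ ≤ ∑ c ∈ C, #{j | cv (Sum.inr j) = c} := sum_le_sum fun c hc =>
        h.1.sub_le_card_inr_color_eq fun j => h.mem_palette_inr j (mem_Icc.1 hc).1 (mem_Icc.1 hc).2
    _ = #{j | cv (Sum.inr j) ∈ C} := sum_card_fiberwise_eq_card_filter _ _ _
    _ ≤ N := (card_filter_le _ _).trans_eq (card_fin N)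

end CompleteBipartite

theorem stmt3 (l : ℕ) (hl : 0 < l) :
    ∀ n : ℕ, n = l + 3 →
      (∃ t, HasIntervalTotalColoring (completeBipartiteGraph (Fin (n + l)) (Fin (2 * n))) t) ∧
      2 * n + 1 + l ≤ wtau (completeBipartiteGraph (Fin (n + l)) (Fin (2 * n))) ∧
      totalChromaticNumber (completeBipartiteGraph (Fin (n + l)) (Fin (2 * n))) = 2 * n + 1 ∧
      l ≤ wtau (completeBipartiteGraph (Fin (n + l)) (Fin (2 * n))) -
            totalChromaticNumber (completeBipartiteGraph (Fin (n + l)) (Fin (2 * n))) := by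
  intro n hn
  have hA : HasIntervalTotalColoring (completeBipartiteGraph (Fin (n + l)) (Fin (2 * n)))
      (n + l + 2 * n + 1) :=
    ⟨_, _, isIntervalTotalColoring_completeBipartiteGraph (by omega) (by omega)⟩
  have hwtau : 2 * n + 1 + l ≤ wtau (completeBipartiteGraph (Fin (n + l)) (Fin (2 * n))) := by
    refine le_csInf ⟨_, hA⟩ fun t ht => ?_
    have hcount := ht.mul_sub_le
    rw [show 2 * n - (n + l) = 3 by omega] at hcount
    omega
  rw [totalChromaticNumber_completeBipartiteGraph (by omega) (by omega)]
  exact ⟨⟨_, hA⟩, hwtau, rfl, by omega⟩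

end ITC
end

section
/- For every positive integer n, the maximum span of an interval total coloring of the hypercube Q_n equals (n+1)(n+2)/2. -/
/-!
Write the palette of `v` as `[a v, a v + n]`. If `u` and `v` differ in `d + 1` coordinates, the
`d + 1` edges at `v` leading towards `u` carry distinct colors `≥ a v`, so one of them has color
`≥ a v + d`; that color also lies in the palette of its other end `w`, which is one step closer to
`u`, whence `a v ≤ a w + (n - d)`. Walking from a vertex whose palette contains `1` to one whose
palette contains `t` gives `t ≤ 1 + n + ∑_{k < n} (n - k) = (n + 1)(n + 2) / 2`.

Conversely, let the palette of `v` start at `1 + ∑_{v j} (j + 1)`, so that the palettes at the ends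
of an edge in direction `i` are shifted by `i + 1`. Positions inside each palette can be chosen so
that both ends give every edge the same color, and the palettes cover `[1, (n + 1)(n + 2) / 2]`
since every integer up to `n(n + 1) / 2` is a subset sum of `{1, …, n}`.
-/

namespace ITC

variable {V : Type*}

open Finset Function

section Palette

variable {G : SimpleGraph V} {cv : V → ℕ} {ce : Sym2 V → ℕ} {t : ℕ}

lemma cv_mem_palette (v : V) : cv v ∈ palette G cv ce v := Set.mem_insert _ _

lemma ce_mem_palette {v : V} {e : Sym2 V} (he : e ∈ G.edgeSet) (hv : v ∈ e) :
    ce e ∈ palette G cv ce v :=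
  Set.mem_insert_of_mem _ ⟨e, he, hv, rfl⟩

lemma IsIntervalTotalColoring.exists_mem_palette (h : IsIntervalTotalColoring G t cv ce)
    {c : ℕ} (hc : c ∈ Set.Icc 1 t) : ∃ v, c ∈ palette G cv ce v := by
  obtain ⟨v, rfl⟩ | ⟨e, he, rfl⟩ := h.2.2.2.1 c hc
  · exact ⟨v, cv_mem_palette v⟩
  · induction e using Sym2.ind with
    | _ x y => exact ⟨x, ce_mem_palette he (Sym2.mem_mk_left x y)⟩

lemma isIntervalTotalColoring_of_palette_eq_Icc (htot : IsTotalColoring G cv ce) (a : V → ℕ)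
    (ha : ∀ v, palette G cv ce v = Set.Icc (a v) (a v + deg G v))
    (hunion : ⋃ v, palette G cv ce v = Set.Icc 1 t) : IsIntervalTotalColoring G t cv ce := by
  have hmem : ∀ v, palette G cv ce v ⊆ Set.Icc 1 t := fun v => hunion ▸ Set.subset_iUnion _ v
  refine ⟨htot, fun v => hmem v (cv_mem_palette v), fun e he => ?_, fun c hc => ?_,
    fun v => ⟨a v, ha v⟩⟩
  · induction e using Sym2.ind with
    | _ x y => exact hmem x (ce_mem_palette he (Sym2.mem_mk_left x y))
  · rw [← hunion, Set.mem_iUnion] at hc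
    obtain ⟨v, rfl | ⟨e, he, -, rfl⟩⟩ := hc
    · exact Or.inl ⟨v, rfl⟩
    · exact Or.inr ⟨e, he, rfl⟩

end Palette

lemma exists_mem_add_le_of_injOn {ι : Type*} {s : Finset ι} {f : ι → ℕ} {a d : ℕ}
    (hf : Set.InjOn f s) (ha : ∀ i ∈ s, a ≤ f i) (hs : #s = d + 1) : ∃ i ∈ s, a + d ≤ f i := by
  by_contra! h
  have := card_le_card_of_injOn f (t := Ico a (a + d))
    (fun i hi => mem_Ico.2 ⟨ha i hi, h i hi⟩) hf
  simp only [Nat.card_Ico] at this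
  omega

lemma range_eq_Iio_card_of_injective {α : Type*} [Fintype α] {f : α → ℕ} (hf : Injective f)
    (hlt : ∀ x, f x < Fintype.card α) : Set.range f = Set.Iio (Fintype.card α) := by
  let g : α → Fin (Fintype.card α) := fun x => ⟨f x, hlt x⟩
  have hg : Bijective g := (Fintype.bijective_iff_injective_and_card g).2
    ⟨fun x y h => hf (congrArg Fin.val h), (Fintype.card_fin _).symm⟩
  refine Set.Subset.antisymm (Set.range_subset_iff.2 hlt) fun m hm => ?_
  obtain ⟨x, hx⟩ := hg.2 ⟨m, hm⟩
  exact ⟨x, congrArg Fin.val hx⟩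

section Hypercube

variable {n : ℕ}

def flipBit (i : Fin n) (u : Fin n → Bool) : Fin n → Bool := update u i (!u i)

@[simp]
lemma flipBit_apply_self (i : Fin n) (u : Fin n → Bool) : flipBit i u i = !u i :=
  update_self _ _ _

lemma flipBit_apply_of_ne {i j : Fin n} (h : j ≠ i) (u : Fin n → Bool) : flipBit i u j = u j :=
  update_of_ne h _ _

lemma ne_flipBit_apply_iff {i j : Fin n} (u : Fin n → Bool) : u j ≠ flipBit i u j ↔ j = i := by
  by_cases hj : j = i
  · subst hj; simp
  · simp [hj, flipBit_apply_of_ne hj]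

lemma flipBit_left_injective (u : Fin n → Bool) : Injective (flipBit · u) := by
  intro i j h
  refine (ne_flipBit_apply_iff (i := j) u).1 ?_
  rw [← show flipBit i u = flipBit j u from h]
  simp

lemma hypercube_adj_iff {u v : Fin n → Bool} : (hypercube n).Adj u v ↔ ∃ i, v = flipBit i u := by
  constructor
  · rintro ⟨i, hi, huniq⟩
    refine ⟨i, funext fun j => ?_⟩
    by_cases hj : j = i
    · rw [hj, flipBit_apply_self]
      exact Bool.eq_not_iff.2 (Ne.symm hi)
    · rw [flipBit_apply_of_ne hj]
      by_contra h
      exact hj (huniq j (Ne.symm h))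
  · rintro ⟨i, rfl⟩
    exact ⟨i, by simp, fun j hj => (ne_flipBit_apply_iff u).1 hj⟩

lemma hypercube_adj_flipBit (i : Fin n) (u : Fin n → Bool) : (hypercube n).Adj u (flipBit i u) :=
  hypercube_adj_iff.2 ⟨i, rfl⟩

lemma deg_hypercube (v : Fin n → Bool) : deg (hypercube n) v = n := by
  have : (hypercube n).neighborSet v = Set.range (flipBit · v) := by
    ext u
    simp only [SimpleGraph.mem_neighborSet, hypercube_adj_iff, Set.mem_range, eq_comm]
  rw [deg, this, ← Set.image_univ, Set.ncard_image_of_injective _ (flipBit_left_injective v),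
    Set.ncard_univ, Nat.card_eq_fintype_card, Fintype.card_fin]

lemma hypercube_incident_iff {v : Fin n → Bool} {e : Sym2 (Fin n → Bool)} :
    e ∈ (hypercube n).edgeSet ∧ v ∈ e ↔ ∃ i, e = s(v, flipBit i v) := by
  constructor
  · rintro ⟨he, hv⟩
    induction e using Sym2.ind with
    | _ x y =>
      rw [SimpleGraph.mem_edgeSet] at he
      rcases Sym2.mem_iff.1 hv with rfl | rfl
      · obtain ⟨i, rfl⟩ := hypercube_adj_iff.1 he
        exact ⟨i, rfl⟩
      · obtain ⟨i, rfl⟩ := hypercube_adj_iff.1 ((hypercube n).adj_symm he)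
        exact ⟨i, Sym2.eq_swap⟩
  · rintro ⟨i, rfl⟩
    exact ⟨hypercube_adj_flipBit i v, Sym2.mem_mk_left _ _⟩

lemma hammingDist_flipBit_add_one {u v : Fin n → Bool} {i : Fin n} (h : u i ≠ v i) :
    hammingDist u (flipBit i v) + 1 = hammingDist u v := by
  have : ({j | u j ≠ flipBit i v j} : Finset (Fin n)) = ({j | u j ≠ v j} : Finset _).erase i := by
    ext j
    by_cases hj : j = i
    · subst hj
      simp [Bool.eq_not_iff.2 h]
    · simp [hj, flipBit_apply_of_ne hj]
  rw [hammingDist, hammingDist, this, card_erase_add_one (by simpa using h)]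

/-- The colors seen at `v`: `none` stands for `v` itself and `some i` for its edge in
direction `i`. -/
def starColor (cv : (Fin n → Bool) → ℕ) (ce : Sym2 (Fin n → Bool) → ℕ) (v : Fin n → Bool) :
    Option (Fin n) → ℕ
  | none => cv v
  | some i => ce s(v, flipBit i v)

lemma palette_hypercube (cv : (Fin n → Bool) → ℕ) (ce : Sym2 (Fin n → Bool) → ℕ)
    (v : Fin n → Bool) : palette (hypercube n) cv ce v = Set.range (starColor cv ce v) := by
  ext c
  constructor
  · rintro (rfl | ⟨e, he, hv, rfl⟩)
    · exact ⟨none, rfl⟩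
    · obtain ⟨i, rfl⟩ := hypercube_incident_iff.1 ⟨he, hv⟩
      exact ⟨some i, rfl⟩
  · rintro ⟨_ | i, rfl⟩
    · exact cv_mem_palette v
    · exact ce_mem_palette (hypercube_adj_flipBit i v) (Sym2.mem_mk_left _ _)

lemma isTotalColoring_hypercube_iff {cv : (Fin n → Bool) → ℕ} {ce : Sym2 (Fin n → Bool) → ℕ} :
    IsTotalColoring (hypercube n) cv ce ↔
      (∀ v i, cv v ≠ cv (flipBit i v)) ∧ ∀ v, Injective (starColor cv ce v) := by
  constructor
  · rintro ⟨hvv, hee, hve⟩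
    refine ⟨fun v i => hvv _ _ (hypercube_adj_flipBit i v), fun v => ?_⟩
    have hmem := fun i => hypercube_adj_flipBit i v
    rintro (_ | i) (_ | j) h
    · rfl
    · exact absurd h (hve v _ (hmem j) (Sym2.mem_mk_left _ _))
    · exact absurd h.symm (hve v _ (hmem i) (Sym2.mem_mk_left _ _))
    · by_contra hij
      refine hee _ _ (hmem i) (hmem j) (fun he => hij ?_)
        ⟨v, Sym2.mem_mk_left _ _, Sym2.mem_mk_left _ _⟩ h
      rw [flipBit_left_injective v (Sym2.congr_right.1 he)]
  · rintro ⟨hvv, hinj⟩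
    refine ⟨fun u v huv => ?_, fun e f he hf hef ⟨w, hwe, hwf⟩ => ?_, fun v e he hv => ?_⟩
    · obtain ⟨i, rfl⟩ := hypercube_adj_iff.1 huv
      exact hvv u i
    · obtain ⟨i, rfl⟩ := hypercube_incident_iff.1 ⟨he, hwe⟩
      obtain ⟨j, rfl⟩ := hypercube_incident_iff.1 ⟨hf, hwf⟩
      exact fun h => hef (by rw [Option.some_injective _ (hinj w h)])
    · obtain ⟨i, rfl⟩ := hypercube_incident_iff.1 ⟨he, hv⟩
      exact fun h => Option.some_ne_none i (hinj v (a₁ := none) (a₂ := some i) h).symm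

end Hypercube

section UpperBound

variable {n : ℕ} {cv : (Fin n → Bool) → ℕ} {ce : Sym2 (Fin n → Bool) → ℕ}
  {a : (Fin n → Bool) → ℕ}

lemma exists_flipBit_add_le (htot : IsTotalColoring (hypercube n) cv ce)
    (ha : ∀ v, palette (hypercube n) cv ce v = Set.Icc (a v) (a v + n)) {u v : Fin n → Bool}
    {d : ℕ} (hd : hammingDist u v = d + 1) : ∃ i, u i ≠ v i ∧ a v + d ≤ a (flipBit i v) + n := by
  have hcol : ∀ w i, w ∈ s(v, flipBit i v) → ce s(v, flipBit i v) ∈ Set.Icc (a w) (a w + n) :=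
    fun w i hw => ha w ▸ ce_mem_palette (hypercube_adj_flipBit i v) hw
  obtain ⟨i, hi, hle⟩ := exists_mem_add_le_of_injOn (s := {j | u j ≠ v j})
    (f := fun i => ce s(v, flipBit i v))
    ((((isTotalColoring_hypercube_iff.1 htot).2 v).comp (Option.some_injective _)).injOn)
    (fun i _ => (hcol v i (Sym2.mem_mk_left _ _)).1) hd
  exact ⟨i, by simpa using hi, hle.trans (hcol (flipBit i v) i (Sym2.mem_mk_right _ _)).2⟩

lemma le_add_sum_of_hammingDist_eq (htot : IsTotalColoring (hypercube n) cv ce)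
    (ha : ∀ v, palette (hypercube n) cv ce v = Set.Icc (a v) (a v + n)) {u v : Fin n → Bool}
    {d : ℕ} (hd : hammingDist u v = d) : a v ≤ a u + ∑ k ∈ range d, (n - k) := by
  induction d generalizing v with
  | zero => rw [hammingDist_eq_zero.1 hd, range_zero, sum_empty, add_zero]
  | succ d ih =>
    obtain ⟨i, hi, hle⟩ := exists_flipBit_add_le htot ha hd
    have := ih (v := flipBit i v) (by have := hammingDist_flipBit_add_one hi; omega)
    rw [sum_range_succ]
    omega

lemma le_of_hasIntervalTotalColoring_hypercube {t : ℕ}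
    (h : HasIntervalTotalColoring (hypercube n) t) : t ≤ 1 + n + ∑ k ∈ range n, (k + 1) := by
  obtain ⟨cv, ce, hc⟩ := h
  choose a ha using hc.2.2.2.2
  simp only [deg_hypercube] at ha
  have ht : 1 ≤ t := (hc.2.1 (fun _ => false)).1.trans (hc.2.1 _).2
  obtain ⟨u, hu⟩ := hc.exists_mem_palette ⟨le_rfl, ht⟩
  obtain ⟨v, hv⟩ := hc.exists_mem_palette ⟨ht, le_rfl⟩
  rw [ha, Set.mem_Icc] at hu hv
  have hdesc := le_add_sum_of_hammingDist_eq hc.1 ha (u := u) (v := v) rfl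
  have hsum : ∑ k ∈ range (hammingDist u v), (n - k) ≤ ∑ k ∈ range n, (k + 1) := calc
    _ ≤ ∑ k ∈ range n, (n - k) := sum_le_sum_of_subset (range_subset_range.2 (by
        simpa using (hammingDist_le_card_fintype (x := u) (y := v))))
    _ = ∑ k ∈ range n, (n - 1 - k + 1) := sum_congr rfl fun k hk => by
        have := mem_range.1 hk; omega
    _ = ∑ k ∈ range n, (k + 1) := sum_range_reflect (· + 1) n
  omega

end UpperBound

section Construction

variable {n : ℕ} (v : Fin n → Bool)

def weight : ℕ := ∑ j, if v j then (j : ℕ) + 1 else 0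

/-- Position of the edge in direction `i` inside the palette of `v`: the palette lists the
downward edges by decreasing direction, then `v` itself (at position `#{j | v j}`), then the
upward edges by increasing direction. -/
def offset (i : Fin n) : ℕ := if v i then #{j | i < j ∧ v j} else #{j | j ≤ i ∨ v j}

def position : Option (Fin n) → ℕ
  | none => #{j | v j}
  | some i => offset v i

variable {v}

lemma card_filter_lt_card_filter {α : Type*} [Fintype α] {p q : α → Prop} [DecidablePred p]
    [DecidablePred q] (hpq : ∀ j, p j → q j) {i : α} (hq : q i) (hp : ¬p i) :
    #{j | p j} < #{j | q j} :=
  card_lt_card <| (ssubset_iff_of_subset (monotone_filter_right _ fun j _ => hpq j)).2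
    ⟨i, by simpa using hq, by simpa using hp⟩

lemma offset_lt_card {i : Fin n} (h : v i = true) : offset v i < #{j | v j} := by
  rw [offset, if_pos h]
  exact card_filter_lt_card_filter (fun j hj => hj.2) h (lt_irrefl i ·.1)

lemma card_lt_offset {i : Fin n} (h : v i = false) : #{j | v j} < offset v i := by
  rw [offset, if_neg (by simp [h])]
  exact card_filter_lt_card_filter (fun j hj => Or.inr hj) (Or.inl le_rfl) (by simp [h])

lemma offset_lt_offset_of_true {i i' : Fin n} (hii : i < i') (h : v i = true)
    (h' : v i' = true) : offset v i' < offset v i := by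
  rw [offset, offset, if_pos h, if_pos h']
  exact card_filter_lt_card_filter (fun j hj => ⟨hii.trans hj.1, hj.2⟩) ⟨hii, h'⟩
    (lt_irrefl i' ·.1)

lemma offset_lt_offset_of_false {i i' : Fin n} (hii : i < i') (h : v i = false)
    (h' : v i' = false) : offset v i < offset v i' := by
  rw [offset, offset, if_neg (by simp [h]), if_neg (by simp [h'])]
  exact card_filter_lt_card_filter (fun j hj => hj.imp_left (·.trans hii.le)) (Or.inl le_rfl)
    (by simp [h', hii])

lemma offset_injective : Injective (offset v) := by
  intro i i' hoff
  by_contra hne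
  wlog hii : i < i' generalizing i i'
  · exact this hoff.symm (Ne.symm hne) (lt_of_le_of_ne (not_lt.1 hii) (Ne.symm hne))
  cases h : v i <;> cases h' : v i'
  · exact (offset_lt_offset_of_false hii h h').ne hoff
  · exact ((card_lt_offset h).trans_le (hoff ▸ (offset_lt_card h').le)).false
  · exact ((offset_lt_card h).trans (hoff ▸ card_lt_offset h')).false
  · exact (offset_lt_offset_of_true hii h h').ne' hoff

lemma position_injective : Injective (position v) := by
  rintro (_ | i) (_ | i') h
  · rfl
  · cases h' : v i'
    · exact absurd h (card_lt_offset h').ne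
    · exact absurd h (offset_lt_card h').ne'
  · cases h' : v i
    · exact absurd h (card_lt_offset h').ne'
    · exact absurd h (offset_lt_card h').ne
  · rw [offset_injective h]

lemma range_position : Set.range (position v) = Set.Icc 0 n := by
  have hle : ∀ x, position v x ≤ n := by
    rintro (_ | i)
    · exact (card_filter_le _ _).trans (by simp)
    · simp only [position, offset]
      split_ifs <;> exact (card_filter_le _ _).trans (by simp)
  rw [range_eq_Iio_card_of_injective position_injective (by simpa [Nat.lt_succ_iff] using hle)]
  ext m
  simp

end Construction

section Coloring

variable {n : ℕ}

def cubeVertexColor (v : Fin n → Bool) : ℕ := 1 + weight v + #{j | v j}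

/-- The edge in direction `i` with upper end `t` gets color `1 + weight t + #{j | i < j ∧ t j}`:
`u ⊔ w` is the upper end of the edge `s(u, w)` and `i` the coordinate where `u` and `w` differ. -/
def cubeEdgeColor : Sym2 (Fin n → Bool) → ℕ :=
  Sym2.lift ⟨fun u w => 1 + weight (u ⊔ w) + #{j | (u ⊔ w) j ∧ ∃ k < j, u k ≠ w k},
    fun u w => by simp only [sup_comm u w, ne_comm]⟩

variable {v : Fin n → Bool} {i : Fin n}

lemma flipBit_of_false (h : v i = false) : flipBit i v = update v i true := by
  simp [flipBit, h]

lemma sup_flipBit (v : Fin n → Bool) (i : Fin n) : v ⊔ flipBit i v = update v i true := by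
  ext j
  by_cases hj : j = i
  · subst hj; simp
  · simp [hj, flipBit_apply_of_ne hj]

lemma weight_update_true (h : v i = false) : weight (update v i true) = weight v + (i + 1) := by
  simp only [weight]
  rw [← add_sum_erase _ _ (mem_univ i), ← add_sum_erase _ _ (mem_univ i), update_self, h,
    sum_congr rfl fun j hj => by rw [update_of_ne (ne_of_mem_erase hj)]]
  simp only [if_true, Bool.false_eq_true, if_false]
  omega

lemma card_update_true (h : v i = false) : #{j | update v i true j} = #{j | v j} + 1 := by
  have : (univ.filter fun j => update v i true j) = insert i (univ.filter fun j => v j) := by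
    ext j
    by_cases hj : j = i
    · subst hj; simp
    · simp [hj]
  rw [this, card_insert_of_notMem (by simp [h])]

lemma card_filter_le_or (v : Fin n → Bool) (i : Fin n) :
    #{j | j ≤ i ∨ v j} = i + 1 + #{j | i < j ∧ v j} := by
  rw [← Fin.card_Iic, ← card_union_of_disjoint]
  · congr 1
    ext j
    simp only [mem_filter, mem_univ, true_and, mem_union, mem_Iic]
    by_cases hj : j ≤ i <;> simp [hj, not_le.1]
  · refine disjoint_left.2 fun j hj hj' => ?_
    simp only [mem_Iic, mem_filter, mem_univ, true_and] at hj hj'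
    exact absurd hj (not_le.2 hj'.1)

lemma cubeEdgeColor_flipBit (v : Fin n → Bool) (i : Fin n) :
    cubeEdgeColor s(v, flipBit i v) = 1 + weight v + offset v i := by
  have hcount : #{j | (v ⊔ flipBit i v) j ∧ ∃ k < j, v k ≠ flipBit i v k} =
      #{j | i < j ∧ v j} := by
    congr 1
    ext j
    simp only [mem_filter, mem_univ, true_and, ne_flipBit_apply_iff, exists_eq_right, sup_flipBit]
    by_cases hij : i < j
    · simp [hij, update_of_ne (ne_of_gt hij)]
    · simp [hij]
  change 1 + weight (v ⊔ flipBit i v) + _ = _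
  rw [hcount, sup_flipBit, offset]
  cases h : v i
  · rw [weight_update_true h, if_neg (by simp), card_filter_le_or]
    omega
  · rw [update_eq_self_iff.2 h.symm, if_pos rfl]

lemma starColor_cube (v : Fin n → Bool) :
    starColor cubeVertexColor cubeEdgeColor v = (1 + weight v + ·) ∘ position v := by
  funext x
  cases x with
  | none => rfl
  | some i => exact cubeEdgeColor_flipBit v i

lemma cubeVertexColor_update_true (h : v i = false) :
    cubeVertexColor (update v i true) = cubeVertexColor v + (i + 2) := by
  rw [cubeVertexColor, cubeVertexColor, weight_update_true h, card_update_true h]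
  omega

lemma cubeVertexColor_ne_flipBit (v : Fin n → Bool) (i : Fin n) :
    cubeVertexColor v ≠ cubeVertexColor (flipBit i v) := by
  cases h : v i
  · rw [flipBit_of_false h, cubeVertexColor_update_true h]
    omega
  · have := cubeVertexColor_update_true (v := flipBit i v) (i := i) (by simp [h])
    have hv : update (flipBit i v) i true = v := by rw [flipBit, update_idem, ← h, update_eq_self]
    rw [hv] at this
    omega

lemma isTotalColoring_cube : IsTotalColoring (hypercube n) cubeVertexColor cubeEdgeColor :=
  isTotalColoring_hypercube_iff.2 ⟨cubeVertexColor_ne_flipBit, fun v => by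
    rw [starColor_cube]
    exact (add_right_injective _).comp position_injective⟩

lemma palette_cube (v : Fin n → Bool) :
    palette (hypercube n) cubeVertexColor cubeEdgeColor v =
      Set.Icc (1 + weight v) (1 + weight v + n) := by
  rw [palette_hypercube, starColor_cube, Set.range_comp, range_position, Set.image_const_add_Icc,
    add_zero]

lemma weight_le (v : Fin n → Bool) : weight v ≤ ∑ k ∈ range n, (k + 1) := by
  rw [← Fin.sum_univ_eq_sum_range (· + 1)]
  exact sum_le_sum fun j _ => by split_ifs <;> simp

lemma weight_snoc (v : Fin n → Bool) (b : Bool) :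
    weight (Fin.snoc v b : Fin (n + 1) → Bool) = weight v + if b then n + 1 else 0 := by
  simp [weight, Fin.sum_univ_castSucc]

lemma exists_weight_eq : ∀ {n : ℕ} {M : ℕ}, M ≤ ∑ k ∈ range n, (k + 1) →
    ∃ v : Fin n → Bool, weight v = M
  | 0, M, hM => ⟨finZeroElim, by simp [weight] at hM ⊢; omega⟩
  | n + 1, M, hM => by
    rw [sum_range_succ] at hM
    by_cases hMn : M ≤ ∑ k ∈ range n, (k + 1)
    · obtain ⟨v, hv⟩ := exists_weight_eq hMn
      exact ⟨Fin.snoc v false, by simp [weight_snoc, hv]⟩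
    · have hn : n ≤ ∑ k ∈ range n, (k + 1) := by
        simpa using sum_le_sum (s := range n) fun k _ => Nat.le_add_left 1 k
      obtain ⟨v, hv⟩ := exists_weight_eq (n := n) (M := M - (n + 1)) (by omega)
      exact ⟨Fin.snoc v true, by rw [weight_snoc, hv, if_pos rfl]; omega⟩

lemma iUnion_palette_cube :
    ⋃ v, palette (hypercube n) cubeVertexColor cubeEdgeColor v =
      Set.Icc 1 (1 + n + ∑ k ∈ range n, (k + 1)) := by
  ext c
  simp only [palette_cube, Set.mem_iUnion, Set.mem_Icc]
  constructor
  · rintro ⟨v, h1, h2⟩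
    have := weight_le v
    omega
  · rintro ⟨h1, h2⟩
    obtain ⟨v, hv⟩ := exists_weight_eq (min_le_right (c - 1) (∑ k ∈ range n, (k + 1)))
    exact ⟨v, by omega, by omega⟩

lemma hasIntervalTotalColoring_hypercube :
    HasIntervalTotalColoring (hypercube n) (1 + n + ∑ k ∈ range n, (k + 1)) :=
  ⟨_, _, isIntervalTotalColoring_of_palette_eq_Icc isTotalColoring_cube (1 + weight ·)
    (fun v => by rw [palette_cube, deg_hypercube]) iUnion_palette_cube⟩

end Coloring

lemma one_add_add_sum_range_succ (n : ℕ) :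
    1 + n + ∑ k ∈ range n, (k + 1) = (n + 1) * (n + 2) / 2 := by
  have h := sum_range_id_mul_two (n + 2)
  rw [sum_range_succ, sum_range_succ', show n + 2 - 1 = n + 1 from rfl, mul_comm (n + 2)] at h
  omega

theorem stmt8_general (n : ℕ) :
    Wtau (hypercube n) = (n + 1) * (n + 2) / 2 := by
  rw [← one_add_add_sum_range_succ]
  exact IsGreatest.csSup_eq ⟨hasIntervalTotalColoring_hypercube,
    fun _ ht => le_of_hasIntervalTotalColoring_hypercube ht⟩

theorem stmt8 (n : ℕ) (hn : 0 < n) :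
    Wtau (hypercube n) = (n + 1) * (n + 2) / 2 :=
  stmt8_general n

end ITC
end
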